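/- arXiv:math/0510521 — 6 statements merged into one kernel-verified Lean document; each statement's English description precedes it below -/
import Mathlib

section
/- For the hinge loss φ(α) = max(0, 1 - α) and strictly positive measures μ, π on a finite set Z, the optimal risk ∑_{z} inf_{α ∈ ℝ} (φ(α)μ(z) + φ(-α)π(z)) equals ∑_z 2·min(μ(z), π(z)), which equals μ(Z) + π(Z) - ∑_z |μ(z) - π(z)|. -/
lemma hinge_inf (a b : ℝ) (ha : 0 < a) (hb : 0 < b) :
    (⨅ α : ℝ, (max 0 (1 - α) * a + max 0 (1 - (-α)) * b)) = 2 * min a b := by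
  apply le_antisymm
  · have hbdd : BddBelow (Set.range fun α : ℝ => max 0 (1 - α) * a + max 0 (1 - (-α)) * b) := by
      refine ⟨0, ?_⟩
      rintro x ⟨α, rfl⟩
      positivity
    rcases le_total a b with h | h
    · calc (⨅ α : ℝ, (max 0 (1 - α) * a + max 0 (1 - (-α)) * b))
          ≤ max 0 (1 - (-1)) * a + max 0 (1 - (-(-1))) * b := ciInf_le hbdd (-1)
        _ = 2 * min a b := by rw [min_eq_left h]; norm_num
    · calc (⨅ α : ℝ, (max 0 (1 - α) * a + max 0 (1 - (-α)) * b))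
          ≤ max 0 (1 - 1) * a + max 0 (1 - (-1)) * b := ciInf_le hbdd 1
        _ = 2 * min a b := by rw [min_eq_right h]; norm_num
  · apply le_ciInf
    intro α
    simp only [sub_neg_eq_add]
    have h1 : min a b * (max 0 (1 - α) + max 0 (1 + α)) ≤
        max 0 (1 - α) * a + max 0 (1 + α) * b := by
      have hma : min a b ≤ a := min_le_left a b
      have hmb : min a b ≤ b := min_le_right a b
      have := mul_le_mul_of_nonneg_left hma (le_max_left 0 (1 - α))
      have := mul_le_mul_of_nonneg_left hmb (le_max_left 0 (1 + α))
      nlinarith [le_max_left 0 (1 - α), le_max_left 0 (1 + α)]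
    have h2 : (2 : ℝ) ≤ max 0 (1 - α) + max 0 (1 + α) := by
      have := le_max_right 0 (1 - α)
      have := le_max_right 0 (1 + α)
      linarith
    have hm : 0 < min a b := lt_min ha hb
    nlinarith

/-- For the hinge loss `φ(α) = max(0, 1-α)` and strictly positive measures `μ, π`
on a finite set `Z`, the optimal risk `∑_z inf_α (φ(α)μ(z) + φ(-α)π(z))` equals
`∑_z 2·min(μ(z), π(z))`, which equals `μ(Z) + π(Z) - ∑_z |μ(z) - π(z)|`. -/
theorem stmt_2 (Z : Type) [Fintype Z] (μ π : Z → ℝ)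
    (hμ : ∀ z, 0 < μ z) (hπ : ∀ z, 0 < π z) :
    (∑ z : Z, ⨅ α : ℝ, (max 0 (1 - α) * μ z + max 0 (1 - (-α)) * π z)) =
        ∑ z : Z, 2 * min (μ z) (π z) ∧
      (∑ z : Z, 2 * min (μ z) (π z)) =
        (∑ z : Z, μ z) + (∑ z : Z, π z) - ∑ z : Z, |μ z - π z| := by
  constructor
  · exact Finset.sum_congr rfl fun z _ => hinge_inf _ _ (hμ z) (hπ z)
  · rw [← Finset.sum_add_distrib, ← Finset.sum_sub_distrib]
    apply Finset.sum_congr rfl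
    intro z _
    rcases le_total (μ z) (π z) with h | h
    · rw [min_eq_left h, abs_of_nonpos (by linarith)]; ring
    · rw [min_eq_right h, abs_of_nonneg (by linarith)]; ring
end

section
/- Let φ(α) = exp(-α) - α - 1. Then for u > 0 the induced function f(u) := -inf_{α ∈ ℝ} (φ(-α) + φ(α)·u) satisfies f(u) = u·log u - log u + affine terms in u, i.e., φ generates the symmetric Kullback–Leibler divergence KL(μ∥π) + KL(π∥μ). -/
/-- The loss `φ(α) = exp(-α) - α - 1` generates the symmetric Kullback–Leibler
divergence: the induced function `f(u) := -inf_α (φ(-α) + φ(α)·u)` satisfies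
`f(u) = u·log u - log u` up to affine terms in `u`, for `u > 0`. -/
theorem stmt_7 :
    ∃ A B : ℝ, ∀ u : ℝ, 0 < u →
      -(⨅ α : ℝ, ((Real.exp (-(-α)) - (-α) - 1)
          + (Real.exp (-α) - α - 1) * u))
        = u * Real.log u - Real.log u + (A * u + B) := by
  refine ⟨0, 0, fun u hu => ?_⟩
  have key : (⨅ α : ℝ, ((Real.exp (-(-α)) - (-α) - 1)
          + (Real.exp (-α) - α - 1) * u)) = (1 - u) * Real.log u := by
    have hlb : ∀ α : ℝ, (1 - u) * Real.log u ≤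
        ((Real.exp (-(-α)) - (-α) - 1) + (Real.exp (-α) - α - 1) * u) := by
      intro α
      simp only [neg_neg]
      have h1 : (α - Real.log u) + 1 ≤ Real.exp (α - Real.log u) :=
        Real.add_one_le_exp _
      have h2 : (-(α - Real.log u)) + 1 ≤ Real.exp (-(α - Real.log u)) :=
        Real.add_one_le_exp _
      have heα : Real.exp (α - Real.log u) = Real.exp α / u := by
        rw [Real.exp_sub, Real.exp_log hu]
      have heα' : Real.exp (-(α - Real.log u)) = u * Real.exp (-α) := by
        rw [neg_sub, Real.exp_sub, Real.exp_log hu, Real.exp_neg]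
        field_simp
      rw [heα] at h1
      rw [heα'] at h2
      have h1' : u * ((α - Real.log u) + 1) ≤ Real.exp α := by
        have := mul_le_mul_of_nonneg_left h1 hu.le
        rw [mul_div_cancel₀] at this
        · linarith
        · exact hu.ne'
      nlinarith [Real.exp_pos α, Real.exp_pos (-α),
        mul_le_mul_of_nonneg_left h2 hu.le]
    refine le_antisymm ?_ (le_ciInf hlb)
    have : ((Real.exp (-(-(Real.log u))) - (-(Real.log u)) - 1)
          + (Real.exp (-(Real.log u)) - (Real.log u) - 1) * u) = (1 - u) * Real.log u := by
      rw [neg_neg, Real.exp_log hu, Real.exp_neg, Real.exp_log hu]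
      field_simp
      ring
    calc (⨅ α : ℝ, ((Real.exp (-(-α)) - (-α) - 1) + (Real.exp (-α) - α - 1) * u))
        ≤ _ := ciInf_le ⟨_, fun x ⟨α, hα⟩ => by rw [← hα]; exact hlb α⟩ (Real.log u)
      _ = (1 - u) * Real.log u := this
  rw [key]; ring
end

section
/- Let φ be a decreasing convex loss and define φ⁻¹(β) = inf{α : φ(α) ≤ β} and Ψ(β) = φ(-φ⁻¹(β)) when φ⁻¹(β) ∈ ℝ, and Ψ(β) = +∞ otherwise. Then Ψ is convex: for all β₁, β₂ with Ψ finite and λ ∈ (0,1), Ψ(λβ₁ + (1-λ)β₂) ≤ λΨ(β₁) + (1-λ)Ψ(β₂). -/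
/-! A convex `φ` on `ℝ` is continuous, so each nonempty, bounded-below sublevel set contains its
infimum `φ⁻¹(β)`. Convexity of `φ` then puts `λ φ⁻¹(β₁) + (1-λ) φ⁻¹(β₂)` in the sublevel set of
`λ β₁ + (1-λ) β₂`, so `φ⁻¹` is convex. Since `φ` is antitone, `Ψ = φ ∘ (-φ⁻¹)` is bounded by `φ`
at the convex combination of `-φ⁻¹(β₁)` and `-φ⁻¹(β₂)`, and convexity of `φ` concludes. -/

open Set

theorem LowerSemicontinuous.apply_csInf_sublevel_le {φ : ℝ → ℝ} (hφ : LowerSemicontinuous φ)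
    {β : ℝ} (hne : {α | φ α ≤ β}.Nonempty) (hbdd : BddBelow {α | φ α ≤ β}) :
    φ (sInf {α | φ α ≤ β}) ≤ β :=
  (hφ.isClosed_preimage β).csInf_mem hne hbdd

theorem bddBelow_sublevel_combo {φ : ℝ → ℝ} {β₁ β₂ a b : ℝ}
    (hbdd₁ : BddBelow {α | φ α ≤ β₁}) (hbdd₂ : BddBelow {α | φ α ≤ β₂})
    (ha : 0 ≤ a) (hb : 0 ≤ b) (hab : a + b = 1) :
    BddBelow {α | φ α ≤ a * β₁ + b * β₂} := by
  have hsub : {α | φ α ≤ a * β₁ + b * β₂} ⊆ {α | φ α ≤ max β₁ β₂} :=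
    fun α hα => le_trans hα (Convex.combo_le_max β₁ β₂ ha hb hab)
  rcases max_choice β₁ β₂ with h | h <;> rw [h] at hsub
  · exact hbdd₁.mono hsub
  · exact hbdd₂.mono hsub

theorem ConvexOn.csInf_sublevel_combo_le {φ : ℝ → ℝ} (hφ : ConvexOn ℝ univ φ) {β₁ β₂ a b : ℝ}
    (hne₁ : {α | φ α ≤ β₁}.Nonempty) (hbdd₁ : BddBelow {α | φ α ≤ β₁})
    (hne₂ : {α | φ α ≤ β₂}.Nonempty) (hbdd₂ : BddBelow {α | φ α ≤ β₂})
    (ha : 0 ≤ a) (hb : 0 ≤ b) (hab : a + b = 1) :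
    sInf {α | φ α ≤ a * β₁ + b * β₂} ≤
      a * sInf {α | φ α ≤ β₁} + b * sInf {α | φ α ≤ β₂} := by
  have hlsc : LowerSemicontinuous φ :=
    (continuousOn_univ.mp (hφ.continuousOn isOpen_univ)).lowerSemicontinuous
  refine csInf_le (bddBelow_sublevel_combo hbdd₁ hbdd₂ ha hb hab) ?_
  calc φ (a * sInf {α | φ α ≤ β₁} + b * sInf {α | φ α ≤ β₂})
      ≤ a * φ (sInf {α | φ α ≤ β₁}) + b * φ (sInf {α | φ α ≤ β₂}) :=
        hφ.2 trivial trivial ha hb hab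
    _ ≤ a * β₁ + b * β₂ := by
        gcongr
        exacts [hlsc.apply_csInf_sublevel_le hne₁ hbdd₁, hlsc.apply_csInf_sublevel_le hne₂ hbdd₂]

/-- Lemma 4(b): for a decreasing convex loss `φ`, the function
`Ψ(β) = φ(-φ⁻¹(β))` (where `φ⁻¹(β) = inf {α : φ(α) ≤ β}`) is convex on the set
where it is finite: for all `β₁, β₂` with finite `φ⁻¹` (sublevel sets nonempty
and bounded below) and `λ ∈ (0,1)`,
`Ψ(λβ₁ + (1-λ)β₂) ≤ λΨ(β₁) + (1-λ)Ψ(β₂)`. -/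
theorem stmt_12 (φ : ℝ → ℝ) (hconv : ConvexOn ℝ Set.univ φ)
    (hmono : Antitone φ)
    (φinv Ψ : ℝ → ℝ) (hφinv : ∀ β, φinv β = sInf {α : ℝ | φ α ≤ β})
    (hΨ : ∀ β, Ψ β = φ (-(φinv β))) :
    ∀ β₁ β₂ : ℝ,
      ({α : ℝ | φ α ≤ β₁}).Nonempty → BddBelow {α : ℝ | φ α ≤ β₁} →
      ({α : ℝ | φ α ≤ β₂}).Nonempty → BddBelow {α : ℝ | φ α ≤ β₂} →
      ∀ l : ℝ, 0 < l → l < 1 →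
        Ψ (l * β₁ + (1 - l) * β₂) ≤ l * Ψ β₁ + (1 - l) * Ψ β₂ := by
  intro β₁ β₂ hne₁ hbdd₁ hne₂ hbdd₂ l hl₀ hl₁
  have hl : 0 ≤ 1 - l := by linarith
  have hinv : φinv (l * β₁ + (1 - l) * β₂) ≤ l * φinv β₁ + (1 - l) * φinv β₂ := by
    simpa only [hφinv] using
      hconv.csInf_sublevel_combo_le hne₁ hbdd₁ hne₂ hbdd₂ hl₀.le hl (add_sub_cancel l 1)
  simp only [hΨ]
  calc φ (-φinv (l * β₁ + (1 - l) * β₂))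
      ≤ φ (l * -φinv β₁ + (1 - l) * -φinv β₂) := hmono (by linarith)
    _ ≤ l * φ (-φinv β₁) + (1 - l) * φ (-φinv β₂) :=
        hconv.2 trivial trivial hl₀.le hl (add_sub_cancel l 1)
end

section
/- Let φ be a convex loss with the generalized inverse φ⁻¹ and Ψ(β) = φ(-φ⁻¹(β)) as above. Then Ψ(Ψ(β)) ≤ β for all β in the domain of Ψ; and if φ is continuous on its (effective) domain, then Ψ(Ψ(β)) = β for all β strictly between β₁ := inf{β : Ψ(β) < +∞} and β₂ := inf{β : Ψ(β) = inf Ψ}. -/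
private lemma slope_mono' {φ : ℝ → ℝ} (hconv : ConvexOn ℝ Set.univ φ)
    {x y z : ℝ} (hxy : x < y) (hyz : y < z) :
    (φ y - φ x) / (y - x) ≤ (φ z - φ y) / (z - y) :=
  hconv.slope_mono_adjacent trivial trivial hxy hyz

/-- If `φ p < φ α` for all `α < p`, then a convex `φ` is strictly decreasing
on `(-∞, p]`. -/
private lemma strictAntiOn_of {φ : ℝ → ℝ} (hconv : ConvexOn ℝ Set.univ φ)
    {p : ℝ} (H : ∀ α, α < p → φ p < φ α) :
    StrictAntiOn φ (Set.Iic p) := by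
  intro u hu v hv huv
  rcases eq_or_lt_of_le (show v ≤ p from hv) with rfl | hvp
  · exact H u huv
  · have h1 := slope_mono' hconv huv hvp
    have h2 : φ p < φ v := H v hvp
    have h3 : (φ p - φ v) / (p - v) < 0 :=
      div_neg_of_neg_of_pos (by linarith) (by linarith)
    have h4 : (φ v - φ u) / (v - u) < 0 := lt_of_le_of_lt h1 h3
    rcases div_neg_iff.mp h4 with ⟨_, h⟩ | ⟨h, _⟩
    · linarith
    · linarith

/-- Convex functions are nondecreasing to the right of a nonnegative slope. -/
private lemma mono_right {φ : ℝ → ℝ} (hconv : ConvexOn ℝ Set.univ φ)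
    {q r x : ℝ} (h1 : q < r) (h2 : r < x) (h3 : φ q ≤ φ r) : φ r ≤ φ x := by
  have hs := slope_mono' hconv h1 h2
  have l : (0 : ℝ) ≤ (φ r - φ q) / (r - q) := div_nonneg (by linarith) (by linarith)
  have l2 : (0 : ℝ) ≤ (φ x - φ r) / (x - r) := le_trans l hs
  have hxr : (0 : ℝ) < x - r := by linarith
  nlinarith [(le_div_iff₀ hxr).mp l2]

/-- Lemma 4(e): for a convex loss `φ` satisfying the assumptions A1–A3
(classification-calibrated, continuous, and penalizing negative deviations from
a minimizer at least as much as positive ones), with `φ⁻¹(β) = inf {α : φ(α) ≤ β}`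
and `Ψ(β) = φ(-φ⁻¹(β))`: one has `Ψ(Ψ(β)) ≤ β` for all `β` in the domain of `Ψ`,
and (since `φ` is continuous) `Ψ(Ψ(β)) = β` for all `β` strictly between
`β₁ := inf {β : Ψ(β) < ∞}` and `β₂ := inf {β : Ψ(β) = inf Ψ}`. -/
theorem stmt_13 (φ : ℝ → ℝ) (hconv : ConvexOn ℝ Set.univ φ)
    (hcont : Continuous φ)
    (d : ℝ) (hd : HasDerivAt φ d 0) (hd0 : d < 0)
    (hA3 : ∀ αs : ℝ, (∀ α, φ αs ≤ φ α) → ∀ ε > 0, φ (αs + ε) ≤ φ (αs - ε))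
    (D : ℝ → Prop)
    (hD : ∀ β, D β ↔ (({α : ℝ | φ α ≤ β}).Nonempty ∧ BddBelow {α : ℝ | φ α ≤ β}))
    (φinv Ψ : ℝ → ℝ) (hφinv : ∀ β, φinv β = sInf {α : ℝ | φ α ≤ β})
    (hΨ : ∀ β, Ψ β = φ (-(φinv β)))
    (β₁ β₂ : ℝ) (hβ₁ : β₁ = sInf {β : ℝ | D β})
    (hβ₂ : β₂ = sInf {β : ℝ | D β ∧ ∀ β', D β' → Ψ β ≤ Ψ β'}) :
    (∀ β : ℝ, D β → Ψ (Ψ β) ≤ β) ∧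
      (∀ β : ℝ, β₁ < β → β < β₂ → Ψ (Ψ β) = β) := by
  classical
  -- A point to the right of 0 where φ has decreased.
  obtain ⟨t, ht0, htφ⟩ : ∃ t : ℝ, 0 < t ∧ φ t < φ 0 := by
    have h := hasDerivAt_iff_tendsto_slope.mp hd
    have h2 : ∀ᶠ x in nhdsWithin (0 : ℝ) {(0 : ℝ)}ᶜ, slope φ 0 x < 0 :=
      h.eventually_lt_const hd0
    have h3 : ∀ᶠ x in nhdsWithin (0 : ℝ) (Set.Ioi 0), slope φ 0 x < 0 :=
      h2.filter_mono (nhdsWithin_mono _ (fun x hx => ne_of_gt hx))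
    obtain ⟨x, hx1, hx2⟩ := (h3.and self_mem_nhdsWithin).exists
    refine ⟨x, hx2, ?_⟩
    rw [slope_def_field] at hx1
    have hxpos : (0 : ℝ) < x - 0 := by simpa using hx2
    rcases div_neg_iff.mp hx1 with ⟨_, h⟩ | ⟨h, _⟩
    · linarith
    · linarith
  set s : ℝ := (φ t - φ 0) / t with hs_def
  have hs : s < 0 := div_neg_of_neg_of_pos (by linarith) ht0
  -- linear lower bound for φ on the left
  have hlow : ∀ z : ℝ, z < 0 → φ 0 + s * z ≤ φ z := by
    intro z hz
    have h1 := slope_mono' hconv hz ht0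
    have h2 : (φ 0 - φ z) / (0 - z) ≤ s := by
      rw [hs_def]; convert h1 using 2; ring
    have h3 : (0 : ℝ) < 0 - z := by linarith
    have h4 : φ 0 - φ z ≤ s * (0 - z) := (div_le_iff₀ h3).mp h2
    nlinarith
  -- every sublevel set is bounded below
  have hbdd : ∀ c : ℝ, BddBelow {α : ℝ | φ α ≤ c} := by
    intro c
    refine ⟨min 0 ((c - φ 0) / s), fun α hα => ?_⟩
    rcases le_or_gt 0 α with h | h
    · exact le_trans (min_le_left _ _) h
    · refine le_trans (min_le_right _ _) ?_
      have h1 := hlow α h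
      have h2 : φ α ≤ c := hα
      have h3 : α * s ≤ c - φ 0 := by nlinarith
      exact (div_le_iff_of_neg hs).mpr h3
  -- key facts about the inf of a nonempty sublevel set
  have hkey : ∀ c : ℝ, ({α : ℝ | φ α ≤ c}).Nonempty →
      φ (sInf {α : ℝ | φ α ≤ c}) = c ∧ ∀ α, α < sInf {α : ℝ | φ α ≤ c} → c < φ α := by
    intro c hne
    have hcl : IsClosed {α : ℝ | φ α ≤ c} := isClosed_le hcont continuous_const
    have hmem : sInf {α : ℝ | φ α ≤ c} ∈ {α : ℝ | φ α ≤ c} :=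
      hcl.csInf_mem hne (hbdd c)
    have hH : ∀ α, α < sInf {α : ℝ | φ α ≤ c} → c < φ α := by
      intro α hα
      by_contra hle
      push_neg at hle
      exact absurd (csInf_le (hbdd c) hle) (not_le.2 hα)
    refine ⟨le_antisymm hmem ?_, hH⟩
    by_contra hlt
    push_neg at hlt
    have hev : ∀ᶠ x in nhds (sInf {α : ℝ | φ α ≤ c}), φ x < c :=
      hcont.continuousAt.eventually_lt continuousAt_const hlt
    obtain ⟨x, hx1, hx2⟩ :=
      (((hev.filter_mono (nhdsWithin_le_nhds
        (s := Set.Iio (sInf {α : ℝ | φ α ≤ c})))).and self_mem_nhdsWithin)).exists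
    exact absurd (csInf_le (hbdd c) (le_of_lt hx1)) (not_le.2 hx2)
  -- if p is a strict left boundary, then φinv (φ p) = p
  have hinv_id : ∀ p : ℝ, (∀ α, α < p → φ p < φ α) → sInf {α : ℝ | φ α ≤ φ p} = p := by
    intro p hp
    refine le_antisymm (csInf_le (hbdd _) (show φ p ≤ φ p from le_rfl)) (le_csInf ⟨p, show φ p ≤ φ p from le_rfl⟩ ?_)
    intro α hα
    by_contra h
    push_neg at h
    exact absurd hα (not_le.2 (hp α h))
  -- existence of a global minimizer given two equal values
  have hminex : ∀ ba bb : ℝ, bb < ba → φ bb = φ ba → ∃ αs, ∀ α, φ αs ≤ φ α := by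
    intro ba bb hlt heq
    obtain ⟨lb, hlb⟩ := hbdd (φ ba)
    set lo := min lb ba with hlo
    have hloba : lo ≤ ba := min_le_right _ _
    obtain ⟨αs, hαsK, hαsmin⟩ :=
      isCompact_Icc.exists_isMinOn (Set.nonempty_Icc.2 hloba) hcont.continuousOn
    refine ⟨αs, fun α => ?_⟩
    have hba_mem : ba ∈ Set.Icc lo ba := ⟨hloba, le_rfl⟩
    have hαsba : φ αs ≤ φ ba := hαsmin hba_mem
    by_cases hK : α ∈ Set.Icc lo ba
    · exact hαsmin hK
    · rw [Set.mem_Icc] at hK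
      push_neg at hK
      rcases lt_or_ge α lo with h | h
      · have hαlb : α < lb := lt_of_lt_of_le h (min_le_left _ _)
        have : ¬ φ α ≤ φ ba := fun hh => absurd (hlb hh) (not_le.2 hαlb)
        push_neg at this
        linarith
      · have hbaα : ba < α := hK h
        exact le_trans hαsba (mono_right hconv hlt hbaα (le_of_eq heq))
  -- core dichotomy
  have hcore : ∀ β : ℝ, D β →
      Ψ (Ψ β) = β ∨ (Ψ (Ψ β) ≤ β ∧ ∃ αs₀ : ℝ, (∀ α, φ αs₀ ≤ φ α) ∧ 0 ≤ αs₀ ∧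
        (∀ α, α < αs₀ → φ αs₀ < φ α) ∧ φ (-αs₀) ≤ β) := by
    intro β hβD
    have hne := ((hD β).mp hβD).1
    obtain ⟨hφa, hHa⟩ := hkey β hne
    set a := sInf {α : ℝ | φ α ≤ β} with ha
    set γ := φ (-a) with hγ
    have hΨβ : Ψ β = γ := by rw [hΨ, hφinv]
    have hneγ : ({α : ℝ | φ α ≤ γ}).Nonempty := ⟨-a, show φ (-a) ≤ γ from le_of_eq hγ.symm⟩
    obtain ⟨hφb, hHb⟩ := hkey γ hneγ
    set b := sInf {α : ℝ | φ α ≤ γ} with hb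
    have hΨΨ : Ψ (Ψ β) = φ (-b) := by rw [hΨβ, hΨ, hφinv]
    have hble : b ≤ -a := csInf_le (hbdd γ) (le_refl γ)
    rcases eq_or_lt_of_le hble with heq | hlt
    · left
      rw [hΨΨ, heq, neg_neg]
      exact hφa
    · right
      obtain ⟨αs, hαs⟩ := hminex (-a) b hlt hφb
      have hneμ : ({α : ℝ | φ α ≤ φ αs}).Nonempty := ⟨αs, show φ αs ≤ φ αs from le_rfl⟩
      obtain ⟨hφs, hHs⟩ := hkey (φ αs) hneμ
      set αs₀ := sInf {α : ℝ | φ α ≤ φ αs} with hαs₀def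
      have hmin0 : ∀ α, φ αs₀ ≤ φ α := by
        intro α; rw [hφs]; exact hαs α
      have hH0 : ∀ α, α < αs₀ → φ αs₀ < φ α := by
        intro α hα; rw [hφs]; exact hHs α hα
      have h0le : 0 ≤ αs₀ := by
        by_contra h
        push_neg at h
        have h1 : (φ 0 - φ αs₀) / (0 - αs₀) ≤ (φ t - φ 0) / (t - 0) :=
          slope_mono' hconv h ht0
        have h2 : (0 : ℝ) ≤ (φ 0 - φ αs₀) / (0 - αs₀) :=
          div_nonneg (by linarith [hmin0 0]) (by linarith)
        have h3 : (0 : ℝ) ≤ (φ t - φ 0) / (t - 0) := le_trans h2 h1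
        have h4 : (φ t - φ 0) / (t - 0) < 0 :=
          div_neg_of_neg_of_pos (by linarith) (by linarith)
        linarith
      have hs0a : αs₀ ≤ -a := by
        by_contra h
        push_neg at h
        have h1 : φ (-a) ≤ φ αs₀ := mono_right hconv hlt h (le_of_eq hφb)
        have h2 : -a ∈ {α : ℝ | φ α ≤ φ αs} := by
          have : φ (-a) ≤ φ αs := le_trans h1 (le_of_eq hφs)
          exact this
        exact absurd (csInf_le (hbdd _) h2) (not_le.2 h)
      have hsa : αs₀ < -a := by
        rcases eq_or_lt_of_le hs0a with h | h
        · exfalso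
          have hγαs : γ = φ αs := by rw [hγ, ← h, hφs]
          have hbeq : b = αs₀ := by rw [hb, hαs₀def, hγαs]
          rw [hbeq, h] at hlt
          exact lt_irrefl _ hlt
        · exact h
      have haa : a ≤ -αs₀ := by linarith
      have hAnti : StrictAntiOn φ (Set.Iic αs₀) := strictAntiOn_of hconv hH0
      have hAntiM : AntitoneOn φ (Set.Iic αs₀) := hAnti.antitoneOn
      have hamem : a ∈ Set.Iic αs₀ := by
        simp only [Set.mem_Iic]; linarith
      have hmβ : φ (-αs₀) ≤ β := by
        rw [← hφa]
        exact hAntiM hamem (by simp only [Set.mem_Iic]; linarith) haa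
      refine ⟨?_, αs₀, hmin0, h0le, hH0, hmβ⟩
      rw [hΨΨ, ← hφa]
      have hbαs : b ≤ αs₀ := by
        refine csInf_le (hbdd γ) ?_
        show φ αs₀ ≤ γ
        exact hmin0 (-a)
      rcases le_or_gt (-αs₀) b with hcase | hcase
      · exact hAntiM hamem (by simp only [Set.mem_Iic]; linarith) (by linarith)
      · have hε : (0 : ℝ) < -b - αs₀ := by linarith
        have hA := hA3 αs₀ hmin0 (-b - αs₀) hε
        have hA' : φ (-b) ≤ φ (2 * αs₀ + b) := by
          have e1 : αs₀ + (-b - αs₀) = -b := by ring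
          have e2 : αs₀ - (-b - αs₀) = 2 * αs₀ + b := by ring
          rwa [e1, e2] at hA
        have hε' : (0 : ℝ) < -a - αs₀ := by linarith
        have hA2 := hA3 αs₀ hmin0 (-a - αs₀) hε'
        have hA2' : γ ≤ φ (2 * αs₀ + a) := by
          have e1 : αs₀ + (-a - αs₀) = -a := by ring
          have e2 : αs₀ - (-a - αs₀) = 2 * αs₀ + a := by ring
          rw [hγ]
          rwa [e1, e2] at hA2
        have h2ab : 2 * αs₀ + a ≤ b := by
          by_contra h
          push_neg at h
          have hmem2 : 2 * αs₀ + a ∈ Set.Iic αs₀ := by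
            simp only [Set.mem_Iic]; linarith
          have := hAnti (show b ∈ Set.Iic αs₀ from hbαs) hmem2 h
          rw [hφb] at this
          linarith
        have h3 : a ≤ 2 * αs₀ + b := by linarith
        have h4 : φ (2 * αs₀ + b) ≤ φ a :=
          hAntiM hamem (by simp only [Set.mem_Iic]; linarith) h3
        exact le_trans hA' h4
  constructor
  · intro β hβD
    rcases hcore β hβD with h | h
    · exact le_of_eq h
    · exact h.1
  · intro β h1 h2
    have hDβ : D β := by
      have hne : ({β' : ℝ | D β'}).Nonempty :=
        ⟨φ 0, (hD _).mpr ⟨⟨0, show φ 0 ≤ φ 0 from le_rfl⟩, hbdd _⟩⟩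
      rw [hβ₁] at h1
      obtain ⟨β', hβ'mem, hβ'lt⟩ := exists_lt_of_csInf_lt hne h1
      obtain ⟨x, hx⟩ := ((hD β').mp hβ'mem).1
      exact (hD β).mpr ⟨⟨x, le_trans hx (le_of_lt hβ'lt)⟩, hbdd β⟩
    rcases hcore β hDβ with h | ⟨hle, αs₀, hmin0, h0le, hH0, hmβ⟩
    · exact h
    · exfalso
      have hAnti : StrictAntiOn φ (Set.Iic αs₀) := strictAntiOn_of hconv hH0
      have hβ₂le : β₂ ≤ φ (-αs₀) := by
        set m := φ (-αs₀) with hm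
        have hinvm : φinv m = -αs₀ := by
          rw [hφinv, hm]
          refine hinv_id (-αs₀) ?_
          intro α hα
          exact hAnti (show α ∈ Set.Iic αs₀ by
              simp only [Set.mem_Iic]; linarith)
            (by simp only [Set.mem_Iic]; linarith) hα
        have hΨm : Ψ m = φ αs₀ := by rw [hΨ, hinvm, neg_neg]
        have hmem : m ∈ {β'' : ℝ | D β'' ∧ ∀ β', D β' → Ψ β'' ≤ Ψ β'} := by
          refine ⟨(hD m).mpr ⟨⟨-αs₀, show φ (-αs₀) ≤ m from le_of_eq hm.symm⟩, hbdd m⟩, ?_⟩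
          intro β' _
          rw [hΨm, hΨ β']
          exact hmin0 _
        have hlbT : ∀ x ∈ {β'' : ℝ | D β'' ∧ ∀ β', D β' → Ψ β'' ≤ Ψ β'}, m ≤ x := by
          intro x hx
          obtain ⟨hDx, hxmin⟩ := hx
          have hnex := ((hD x).mp hDx).1
          obtain ⟨hφax, _⟩ := hkey x hnex
          set ax := sInf {α : ℝ | φ α ≤ x} with hax
          have hΨx : Ψ x = φ (-ax) := by rw [hΨ, hφinv]
          have h5 : φ (-ax) ≤ φ αs₀ := by
            rw [← hΨx, ← hΨm]
            exact hxmin m hmem.1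
          have h6 : αs₀ ≤ -ax := by
            by_contra h
            push_neg at h
            exact absurd h5 (not_le.2 (hH0 _ h))
          have h7 : ax ≤ -αs₀ := by linarith
          calc m = φ (-αs₀) := hm
            _ ≤ φ ax := hAnti.antitoneOn
                (show ax ∈ Set.Iic αs₀ by simp only [Set.mem_Iic]; linarith)
                (by simp only [Set.mem_Iic]; linarith) h7
            _ = x := hφax
        rw [hβ₂]
        exact csInf_le ⟨m, hlbT⟩ hmem
      linarith
end

section
/- Let f: [0, ∞) → ℝ be continuous and convex with f(u) = u·f(1/u) for all u > 0, and extend f by f(u) = +∞ for u < 0. Define Ψ(β) := f*(-β), where f* is the convex conjugate. Then for every u > 0 and every v₁ in the subdifferential ∂f(u), we have Ψ(Ψ(-v₁)) = -v₁. -/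
/-!
Write `Ψ β = sup_{v ≥ 0} (-β v - f v)`. A subgradient `c` of `f` at `p ≥ 0` makes `p` a maximiser,
so `Ψ (-c) = c p - f p`. The symmetry `f w = w f (1/w)` turns a subgradient `v₁` at `u` into the
subgradient `f u - v₁ u` at `1/u` (first on `(0, ∞)`, then at `0` by continuity). Hence
`Ψ (Ψ (-v₁)) = Ψ (-(f u - v₁ u)) = (f u - v₁ u)/u - f (1/u) = -v₁`.
-/

open Set

lemma sSup_conjugate_eq_of_subgradient {f : ℝ → ℝ} {p c : ℝ} (hp : 0 ≤ p)
    (hsub : ∀ w : ℝ, 0 ≤ w → f p + c * (w - p) ≤ f w) :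
    sSup {x : ℝ | ∃ v : ℝ, 0 ≤ v ∧ x = c * v - f v} = c * p - f p := by
  refine IsGreatest.csSup_eq ⟨⟨p, hp, rfl⟩, ?_⟩
  rintro x ⟨v, hv, rfl⟩
  linarith [hsub v hv]

lemma subgradient_inv_of_subgradient {f : ℝ → ℝ} (hsym : ∀ u : ℝ, 0 < u → f u = u * f (1 / u))
    {u v₁ : ℝ} (hu : 0 < u) (hsub : ∀ w : ℝ, 0 ≤ w → f u + v₁ * (w - u) ≤ f w) :
    ∀ w : ℝ, 0 < w → f (1 / u) + (f u - v₁ * u) * (w - 1 / u) ≤ f w := by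
  intro w hw
  have hscaled : w * (f u + v₁ * (1 / w - u)) ≤ w * f (1 / w) :=
    mul_le_mul_of_nonneg_left (hsub (1 / w) (by positivity)) hw.le
  have hfu : f (1 / u) = f u / u := by
    rw [hsym u hu]
    field_simp
  have hlhs : f (1 / u) + (f u - v₁ * u) * (w - 1 / u) = w * (f u + v₁ * (1 / w - u)) := by
    rw [hfu]
    field_simp
    ring
  rw [hlhs, hsym w hw]
  exact hscaled

lemma subgradient_of_forall_pos {f : ℝ → ℝ} (hf : ContinuousWithinAt f (Ici 0) 0) {p c : ℝ}
    (hsub : ∀ w : ℝ, 0 < w → f p + c * (w - p) ≤ f w) :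
    ∀ w : ℝ, 0 ≤ w → f p + c * (w - p) ≤ f w := by
  intro w hw
  rcases hw.lt_or_eq with hw | rfl
  · exact hsub w hw
  · have hmem : (0 : ℝ) ∈ closure (Ioi 0) := by simp
    exact ContinuousWithinAt.closure_le hmem (by fun_prop)
      (hf.mono Ioi_subset_Ici_self) hsub

theorem stmt_14_general (f : ℝ → ℝ)
    (hcont : ContinuousOn f (Set.Ici (0 : ℝ)))
    (hsym : ∀ u : ℝ, 0 < u → f u = u * f (1 / u))
    (Ψ : ℝ → ℝ)
    (hΨ : ∀ β : ℝ, Ψ β = sSup {x : ℝ | ∃ v : ℝ, 0 ≤ v ∧ x = -β * v - f v}) :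
    ∀ u : ℝ, 0 < u → ∀ v₁ : ℝ,
      (∀ w : ℝ, 0 ≤ w → f u + v₁ * (w - u) ≤ f w) →
      Ψ (Ψ (-v₁)) = -v₁ := by
  intro u hu v₁ hsub
  have hsub_inv : ∀ w : ℝ, 0 ≤ w → f (1 / u) + (f u - v₁ * u) * (w - 1 / u) ≤ f w :=
    subgradient_of_forall_pos (hcont 0 self_mem_Ici) (subgradient_inv_of_subgradient hsym hu hsub)
  have hΨ₁ : Ψ (-v₁) = v₁ * u - f u := by
    simpa only [hΨ, neg_neg] using sSup_conjugate_eq_of_subgradient hu.le hsub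
  have hΨ₂ : Ψ (v₁ * u - f u) = (f u - v₁ * u) * (1 / u) - f (1 / u) := by
    simpa only [hΨ, neg_sub] using
      sSup_conjugate_eq_of_subgradient (one_div_pos.mpr hu).le hsub_inv
  rw [hΨ₁, hΨ₂, hsym u hu]
  field_simp
  ring

/-- Key step of Corollary 3 ((c) ⇒ (a)): if `f : [0,∞) → ℝ` is continuous,
convex, and satisfies `f(u) = u·f(1/u)` for `u > 0` (extended by `+∞` on
`(-∞,0)`, so that the conjugate is a supremum over `v ≥ 0`), then
`Ψ(β) := f*(-β)` satisfies `Ψ(Ψ(-v₁)) = -v₁` for every `u > 0` and every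
subgradient `v₁ ∈ ∂f(u)`. -/
theorem stmt_14 (f : ℝ → ℝ)
    (hconv : ConvexOn ℝ (Set.Ici (0 : ℝ)) f)
    (hcont : ContinuousOn f (Set.Ici (0 : ℝ)))
    (hsym : ∀ u : ℝ, 0 < u → f u = u * f (1 / u))
    (Ψ : ℝ → ℝ)
    (hΨ : ∀ β : ℝ, Ψ β = sSup {x : ℝ | ∃ v : ℝ, 0 ≤ v ∧ x = -β * v - f v}) :
    ∀ u : ℝ, 0 < u → ∀ v₁ : ℝ,
      (∀ w : ℝ, 0 ≤ w → f u + v₁ * (w - u) ≤ f w) →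
      Ψ (Ψ (-v₁)) = -v₁ :=
  stmt_14_general f hcont hsym Ψ hΨ
end

section
/- Let Z be a finite set, let μ, π: Z → ℝ be strictly positive with total masses p = μ(Z), q = π(Z), and let φ: ℝ → ℝ be convex, differentiable at 0 with φ'(0) < 0, such that f(u) := -inf_α(φ(-α) + φ(α)u) has the form f(u) = -c·min(u,1) + a·u + b with c > 0 and (a - b)(p - q) ≥ 0, and φ(0) = (c - a - b)/2. Then for any γ: Z → ℝ, (c/2)·∑_{z : (μ(z)-π(z))·γ(z) < 0} |μ(z) - π(z)| ≤ ∑_z [π(z)φ(-γ(z)) + μ(z)φ(γ(z))] - c·∑_z min(μ(z), π(z)) + a·p + b·q. -/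
/-- Inequality (32), the core of Lemma 2: for a classification-calibrated convex
loss `φ` whose induced f-divergence has the form `f(u) = -c·min(u,1) + a·u + b`
with `c > 0`, `(a-b)(p-q) ≥ 0` and `φ(0) = (c-a-b)/2`, one has for any
discriminant `γ : Z → ℝ`:
`(c/2)·∑_{z : (μ(z)-π(z))γ(z) < 0} |μ(z)-π(z)|
  ≤ ∑_z [π(z)φ(-γ(z)) + μ(z)φ(γ(z))] - c·∑_z min(μ(z),π(z)) + a·p + b·q`. -/
theorem stmt_19 (Z : Type) [Fintype Z] (μ π : Z → ℝ)
    (hμ : ∀ z, 0 < μ z) (hπ : ∀ z, 0 < π z)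
    (p q : ℝ) (hp : p = ∑ z : Z, μ z) (hq : q = ∑ z : Z, π z)
    (φ : ℝ → ℝ) (hconv : ConvexOn ℝ Set.univ φ)
    (d : ℝ) (hd : HasDerivAt φ d 0) (hd0 : d < 0)
    (c a b : ℝ) (hc : 0 < c) (hab : 0 ≤ (a - b) * (p - q))
    (hf : ∀ u : ℝ, 0 ≤ u →
      -(⨅ α : ℝ, (φ (-α) + φ α * u)) = -c * min u 1 + a * u + b)
    (hφ0 : φ 0 = (c - a - b) / 2) (γ : Z → ℝ) :
    c / 2 * ∑ z : Z, (if (μ z - π z) * γ z < 0 then |μ z - π z| else 0) ≤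
      (∑ z : Z, (π z * φ (-(γ z)) + μ z * φ (γ z)))
        - c * (∑ z : Z, min (μ z) (π z)) + a * p + b * q := by
  classical
  -- tangent line bound at 0
  have tangent : ∀ x : ℝ, φ 0 + d * x ≤ φ x := by
    intro x
    rcases lt_trichotomy x 0 with h | h | h
    · have := hconv.slope_le_of_hasDerivAt (Set.mem_univ x) (Set.mem_univ 0) h hd
      rw [slope_def_field, div_le_iff₀ (by linarith : (0:ℝ) < 0 - x)] at this
      nlinarith
    · simp [h]
    · have := hconv.le_slope_of_hasDerivAt (Set.mem_univ 0) (Set.mem_univ x) h hd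
      rw [slope_def_field, le_div_iff₀ (by linarith : (0:ℝ) < x - 0)] at this
      nlinarith
  -- midpoint convexity
  have midpoint : ∀ x : ℝ, 2 * φ 0 ≤ φ (-x) + φ x := by
    intro x
    have h := hconv.2 (Set.mem_univ (-x)) (Set.mem_univ x)
      (by norm_num : (0:ℝ) ≤ 1/2) (by norm_num : (0:ℝ) ≤ 1/2) (by norm_num)
    simp only [smul_eq_mul] at h
    have hx : (1/2 : ℝ) * (-x) + (1/2) * x = 0 := by ring
    rw [hx] at h
    linarith
  -- φ is bounded below
  have hBB : BddBelow (Set.range φ) := by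
    by_contra hnb
    have hb0 : b = 0 := by
      have h0 := hf 0 le_rfl
      have hnb0 : ¬ BddBelow (Set.range fun α : ℝ => φ (-α) + φ α * 0) := by
        rintro ⟨m, hm⟩
        refine hnb ⟨m, ?_⟩
        rintro y ⟨x, rfl⟩
        have := hm (Set.mem_range_self (-x))
        simpa using this
      rw [Real.iInf_of_not_bddBelow hnb0] at h0
      simpa using h0.symm
    obtain ⟨y, ⟨x0, rfl⟩, hx0⟩ := not_bddBelow_iff.mp hnb (-(|a| + 1))
    have key : ∀ u : ℝ, 1 ≤ u → a * u = c ∨ u ≤ -(c - φ (-x0)) := by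
      intro u hu
      have hu0 : (0:ℝ) ≤ u := by linarith
      have hfu := hf u hu0
      rw [min_eq_right hu, hb0] at hfu
      by_cases hB : BddBelow (Set.range fun α : ℝ => φ (-α) + φ α * u)
      · right
        have hle := ciInf_le hB x0
        have hiv : (⨅ α : ℝ, (φ (-α) + φ α * u)) = c - a * u := by linarith
        rw [hiv] at hle
        have h1 : φ x0 + a ≤ -1 := by
          have := le_abs_self a
          linarith
        nlinarith
      · left
        rw [Real.iInf_of_not_bddBelow hB] at hfu
        linarith
    set M := max 1 (-(c - φ (-x0))) + 1 with hM
    have hM1 : (1:ℝ) ≤ M := by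
      have := le_max_left (1:ℝ) (-(c - φ (-x0))); simp only [hM]; linarith
    have hMgt : -(c - φ (-x0)) < M := by
      have := le_max_right (1:ℝ) (-(c - φ (-x0))); simp only [hM]; linarith
    rcases key M hM1 with k1 | k1
    · rcases key (M + 1) (by linarith) with k2 | k2
      · have ha : a = 0 := by nlinarith
        rw [ha] at k1; simp at k1; linarith
      · linarith
    · linarith
  obtain ⟨m, hm⟩ := hBB
  have hmφ : ∀ x, m ≤ φ x := fun x => hm (Set.mem_range_self x)
  -- uniform bddness of the inner function
  have hBu : ∀ u : ℝ, 0 ≤ u → BddBelow (Set.range fun α : ℝ => φ (-α) + φ α * u) := by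
    intro u hu
    refine ⟨m + min m 0 * u, ?_⟩
    rintro y ⟨α, rfl⟩
    have h1 : min m 0 * u ≤ φ α * u :=
      mul_le_mul_of_nonneg_right (le_trans (min_le_left _ _) (hmφ α)) hu
    have := hmφ (-α)
    simp only
    linarith
  -- φ ≥ -b
  have hφb : ∀ x : ℝ, -b ≤ φ x := by
    intro x
    have h0 := hf 0 le_rfl
    have hle := ciInf_le (hBu 0 le_rfl) (-x)
    have hiv : (⨅ α : ℝ, (φ (-α) + φ α * 0)) = -b := by
      have h : -c * min (0:ℝ) 1 + a * 0 + b = b := by norm_num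
      rw [h] at h0; linarith
    rw [hiv] at hle
    simpa using hle
  -- φ ≥ -a
  have hφa : ∀ x : ℝ, -a ≤ φ x := by
    intro x
    by_contra hlt
    push_neg at hlt
    have hsneg : φ x + a < 0 := by linarith
    have bound : ∀ u : ℝ, 1 ≤ u → c - b - φ (-x) ≤ u * (φ x + a) := by
      intro u hu
      have hu0 : (0:ℝ) ≤ u := by linarith
      have hfu := hf u hu0
      rw [min_eq_right hu] at hfu
      have hle := ciInf_le (hBu u hu0) x
      have hiv : (⨅ α : ℝ, (φ (-α) + φ α * u)) = c - a * u - b := by linarith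
      rw [hiv] at hle
      nlinarith
    set K := c - b - φ (-x) with hK
    set u := max 1 ((|K| + 1) / (-(φ x + a))) with hu
    have hu1 : (1:ℝ) ≤ u := le_max_left _ _
    have h2 : (|K| + 1) / (-(φ x + a)) ≤ u := le_max_right _ _
    have hns : 0 < -(φ x + a) := by linarith
    rw [div_le_iff₀ hns] at h2
    have hb := bound u hu1
    have habs := neg_abs_le K
    nlinarith [habs, h2, hb]
  -- φ ≥ φ 0 - c/2
  have mlb : ∀ x : ℝ, φ 0 - c / 2 ≤ φ x := by
    intro x
    have h1 := hφa x
    have h2 := hφb x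
    rw [hφ0]
    linarith
  -- pointwise bound
  have pointwise : ∀ z : Z,
      c * min (μ z) (π z) - a * μ z - b * π z + (a - b) * (μ z - π z) / 2
        + (if (μ z - π z) * γ z < 0 then c / 2 * |μ z - π z| else 0)
        ≤ π z * φ (-(γ z)) + μ z * φ (γ z) := by
    intro z
    have hm' := hμ z
    have hn' := hπ z
    by_cases hbad : (μ z - π z) * γ z < 0
    · rw [if_pos hbad]
      have hdg : 0 < d * ((μ z - π z) * γ z) := mul_pos_of_neg_of_neg hd0 hbad
      have h1 : π z * (φ 0 + d * (-(γ z))) ≤ π z * φ (-(γ z)) :=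
        mul_le_mul_of_nonneg_left (tangent (-(γ z))) hn'.le
      have h2 : μ z * (φ 0 + d * γ z) ≤ μ z * φ (γ z) :=
        mul_le_mul_of_nonneg_left (tangent (γ z)) hm'.le
      rw [hφ0] at h1 h2
      rcases le_total (μ z) (π z) with hmn | hmn
      · rw [min_eq_left hmn, abs_of_nonpos (by linarith : μ z - π z ≤ 0)]
        nlinarith
      · rw [min_eq_right hmn, abs_of_nonneg (by linarith : (0:ℝ) ≤ μ z - π z)]
        nlinarith
    · rw [if_neg hbad, add_zero]
      have mp := midpoint (γ z)
      rcases le_total (μ z) (π z) with hmn | hmn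
      · rw [min_eq_left hmn]
        have h1 : μ z * (2 * φ 0) ≤ μ z * (φ (-(γ z)) + φ (γ z)) :=
          mul_le_mul_of_nonneg_left mp hm'.le
        have h2 : (π z - μ z) * (φ 0 - c / 2) ≤ (π z - μ z) * φ (-(γ z)) :=
          mul_le_mul_of_nonneg_left (mlb (-(γ z))) (by linarith)
        rw [hφ0] at h1 h2
        nlinarith
      · rw [min_eq_right hmn]
        have h1 : π z * (2 * φ 0) ≤ π z * (φ (-(γ z)) + φ (γ z)) :=
          mul_le_mul_of_nonneg_left mp hn'.le
        have h2 : (μ z - π z) * (φ 0 - c / 2) ≤ (μ z - π z) * φ (γ z) :=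
          mul_le_mul_of_nonneg_left (mlb (γ z)) (by linarith)
        rw [hφ0] at h1 h2
        nlinarith
  -- sum up
  have key : ∑ z : Z, (c * min (μ z) (π z) - a * μ z - b * π z + (a - b) * (μ z - π z) / 2
      + (if (μ z - π z) * γ z < 0 then c / 2 * |μ z - π z| else 0))
      ≤ ∑ z : Z, (π z * φ (-(γ z)) + μ z * φ (γ z)) :=
    Finset.sum_le_sum (fun z _ => pointwise z)
  rw [Finset.sum_add_distrib] at key
  have e1 : ∑ z : Z, (if (μ z - π z) * γ z < 0 then c / 2 * |μ z - π z| else 0)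
      = c / 2 * ∑ z : Z, (if (μ z - π z) * γ z < 0 then |μ z - π z| else 0) := by
    rw [Finset.mul_sum]
    refine Finset.sum_congr rfl fun z _ => ?_
    split_ifs <;> simp
  have e2 : ∑ z : Z, (c * min (μ z) (π z) - a * μ z - b * π z + (a - b) * (μ z - π z) / 2)
      = c * (∑ z : Z, min (μ z) (π z)) - a * p - b * q + (a - b) * (p - q) / 2 := by
    rw [hp, hq]
    simp only [Finset.sum_add_distrib, Finset.sum_sub_distrib, ← Finset.mul_sum,
      ← Finset.sum_div]
  rw [e1, e2] at key
  linarith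
end
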